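/- arXiv:2006.08113 — 7 statements merged into one kernel-verified Lean document; each statement's English description precedes it below -/
import Mathlib

section
/- A nonzero integer n admits rationals X, Y, Z with X² + Y² = Z², XY = 2n, and XYZ ≠ 0 if and only if there exist positive rationals P, Q, R, S with P² + nQ² = R² and P² − nQ² = S² and Q ≠ 0. -/
lemma rat_sq_ne_two (q : ℚ) : q^2 ≠ 2 := by
  intro h
  apply irrational_sqrt_two
  refine ⟨|q|, ?_⟩
  have h' : ((q : ℝ))^2 = 2 := by exact_mod_cast h
  rw [← h', Real.sqrt_sq_eq_abs]
  push_cast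
  ring

theorem stmt_1 (n : ℤ) (hn : n ≠ 0) :
    (∃ X Y Z : ℚ, X^2 + Y^2 = Z^2 ∧ X * Y = 2 * (n : ℚ) ∧ X * Y * Z ≠ 0) ↔
    (∃ P Q R S : ℚ, 0 < P ∧ 0 < Q ∧ 0 < R ∧ 0 < S ∧
      P^2 + (n : ℚ) * Q^2 = R^2 ∧ P^2 - (n : ℚ) * Q^2 = S^2 ∧ Q ≠ 0) := by
  constructor
  · rintro ⟨X, Y, Z, h1, h2, h3⟩
    have hX : X ≠ 0 := fun h => h3 (by simp [h])
    have hY : Y ≠ 0 := fun h => h3 (by simp [h])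
    have hZ : Z ≠ 0 := fun h => h3 (by simp [h])
    have hXY1 : X + Y ≠ 0 := by
      intro h
      have hy : Y = -X := by linarith
      have : (Z / X)^2 = 2 := by
        subst hy
        field_simp
        linarith [h1]
      exact rat_sq_ne_two _ this
    have hXY2 : X - Y ≠ 0 := by
      intro h
      have hy : Y = X := by linarith
      have : (Z / X)^2 = 2 := by
        subst hy
        field_simp
        linarith [h1]
      exact rat_sq_ne_two _ this
    refine ⟨|Z| / 2, 1, |X + Y| / 2, |X - Y| / 2, ?_, one_pos, ?_, ?_, ?_, ?_, one_ne_zero⟩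
    · positivity
    · positivity
    · positivity
    · rw [div_pow, div_pow, sq_abs, sq_abs]
      have : (X + Y)^2 = Z^2 + 4 * (n : ℚ) := by
        have := h2; nlinarith [h1]
      rw [this]; ring
    · rw [div_pow, div_pow, sq_abs, sq_abs]
      have : (X - Y)^2 = Z^2 - 4 * (n : ℚ) := by
        nlinarith [h1, h2]
      rw [this]; ring
  · rintro ⟨P, Q, R, S, hP, hQ, hR, hS, h1, h2, hQ0⟩
    refine ⟨(R + S) / Q, (R - S) / Q, 2 * P / Q, ?_, ?_, ?_⟩
    · field_simp
      linear_combination (-2 : ℚ) * h1 - 2 * h2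
    · field_simp
      linear_combination -h1 + h2
    · have hRS : R + S ≠ 0 := by positivity
      have hRS2 : R - S ≠ 0 := by
        intro h
        have hs : S = R := by linarith
        have : (n : ℚ) * Q^2 = 0 := by nlinarith [h1, h2]
        rcases mul_eq_zero.1 this with h' | h'
        · exact hn (by exact_mod_cast h')
        · exact hQ0 (pow_eq_zero_iff (n := 2) (by norm_num) |>.1 h')
      have hZ : 2 * P / Q ≠ 0 := by positivity
      have h1' : (R + S) / Q ≠ 0 := div_ne_zero hRS hQ0
      have h2' : (R - S) / Q ≠ 0 := div_ne_zero hRS2 hQ0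
      exact mul_ne_zero (mul_ne_zero h1' h2') hZ
end

section
/- If n is a nonzero integer such that the system X² + Y² = Z², XY = 2n has a solution in positive rationals, then there exist integers u, v, m with m ≠ 0 such that n·m² = u·v·(u² − v²). -/
/-!
A right triangle with legs `X, Y`, hypotenuse `Z` and area `n` gives the rational point
`x = (X + Z) / Y`, `y = 2 (X + Z) / Y²` on the curve `n y² = x³ - x`, with `y ≠ 0`.
Writing `x = U / V` and `y = a / b` and multiplying the curve equation by `b⁴ V⁴` gives
`n (a b V²)² = (b U) (b V) ((b U)² - (b V)²)`.
-/

theorem right_triangle_mul_sq_eq_cube_sub {K : Type*} [Field K] {n X Y Z : K} (hY : Y ≠ 0)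
    (hpyth : X ^ 2 + Y ^ 2 = Z ^ 2) (harea : X * Y = 2 * n) :
    n * (2 * (X + Z) / Y ^ 2) ^ 2 = ((X + Z) / Y) ^ 3 - (X + Z) / Y := by
  field_simp
  linear_combination (-2) * (X + Z) ^ 2 * harea + (X + Z) * Y * hpyth

theorem exists_int_mul_sq_eq_of_rat_point (n : ℤ) {x y : ℚ} (hy : y ≠ 0)
    (h : n * y ^ 2 = x ^ 3 - x) :
    ∃ u v m : ℤ, m ≠ 0 ∧ n * m ^ 2 = u * v * (u ^ 2 - v ^ 2) := by
  refine ⟨y.den * x.num, y.den * x.den, y.num * y.den * x.den ^ 2,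
    mul_ne_zero (mul_ne_zero (Rat.num_ne_zero.mpr hy) (mod_cast y.den_nz))
      (pow_ne_zero 2 (mod_cast x.den_nz)), ?_⟩
  rw [← Rat.num_div_den x, ← Rat.num_div_den y] at h
  field_simp at h
  have key : (n : ℚ) * (y.num * y.den * x.den ^ 2) ^ 2
      = (y.den * x.num) * (y.den * x.den) * ((y.den * x.num) ^ 2 - (y.den * x.den) ^ 2) := by
    linear_combination ((y.den : ℚ) ^ 2 * x.den) * h
  exact_mod_cast key

theorem stmt_3_general (n : ℤ)
    (h : ∃ X Y Z : ℚ, 0 < X ∧ 0 < Y ∧ 0 < Z ∧ X^2 + Y^2 = Z^2 ∧ X * Y = 2 * (n : ℚ)) :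
    ∃ u v m : ℤ, m ≠ 0 ∧ n * m^2 = u * v * (u^2 - v^2) := by
  obtain ⟨X, Y, Z, hX, hY, hZ, hpyth, harea⟩ := h
  exact exists_int_mul_sq_eq_of_rat_point n (by positivity)
    (right_triangle_mul_sq_eq_cube_sub hY.ne' hpyth harea)

theorem stmt_3 (n : ℤ) (hn : n ≠ 0)
    (h : ∃ X Y Z : ℚ, 0 < X ∧ 0 < Y ∧ 0 < Z ∧ X^2 + Y^2 = Z^2 ∧ X * Y = 2 * (n : ℚ)) :
    ∃ u v m : ℤ, m ≠ 0 ∧ n * m^2 = u * v * (u^2 - v^2) :=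
  stmt_3_general n h
end

section
/- The only integer solutions (u, v, w) of w² = u·v·(u² − v²) are those with w = 0, namely (u, v, w) = (a, a, 0), (a, −a, 0), (0, v, 0), or (u, 0, 0). -/
/-! Fermat's descent. After dividing out `gcd u v`, the pairwise coprime factors `u`, `v`,
`u² - v²` of the square `w²` are squares up to sign, so `u² - v² = a⁴ - b⁴ = ±t²` is a primitive
solution of `x⁴ - y⁴ = z²` with `y z ≠ 0`. Such a solution yields another one with smaller `|x|`:
if `y` is odd, parametrise the Pythagorean triple `(y², z, x²)`; if `y` is even, the triple
`(z, y², x²)` gives `x² = q⁴ + 4p⁴`, and parametrising the triple `(q², 2p², x)` gives the new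
solution with `q` as its `z`. -/

namespace Int

theorem exists_pos_sq_of_isCoprime {a b c : ℤ} (hab : IsCoprime a b) (ha : 0 < a)
    (h : a * b = c ^ 2) : ∃ p, 0 < p ∧ a = p ^ 2 := by
  obtain ⟨p, rfl | rfl⟩ := Int.sq_of_isCoprime hab h
  · exact ⟨|p|, abs_pos.mpr (by rintro rfl; simp at ha), (sq_abs p).symm⟩
  · nlinarith [sq_nonneg p]

theorem exists_sq_eq_pow_four_of_isCoprime {a b c : ℤ} (hab : IsCoprime a b)
    (h : a * b = c ^ 2) : ∃ p, a ^ 2 = p ^ 4 := by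
  obtain ⟨p, rfl | rfl⟩ := Int.sq_of_isCoprime hab h <;> exact ⟨p, by ring⟩

theorem exists_two_mul_sq_of_mul_eq_two_mul_sq {a b k : ℤ} (hab : IsCoprime a b) (ha : Even a)
    (ha0 : 0 < a) (hb0 : 0 < b) (h : a * b = 2 * k ^ 2) :
    ∃ p q, IsCoprime p q ∧ a = 2 * p ^ 2 ∧ b = q ^ 2 := by
  obtain ⟨a', rfl⟩ := ha
  have h' : a' * b = k ^ 2 := mul_left_cancel₀ two_ne_zero (by linear_combination h)
  have hab' : IsCoprime a' b := hab.of_isCoprime_of_dvd_left ⟨2, by ring⟩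
  obtain ⟨p, -, rfl⟩ := exists_pos_sq_of_isCoprime hab' (by omega) h'
  obtain ⟨q, -, rfl⟩ := exists_pos_sq_of_isCoprime hab'.symm hb0 (by rw [mul_comm]; exact h')
  exact ⟨p, q, (IsCoprime.pow_iff two_pos two_pos).mp hab', by ring, rfl⟩

end Int

structure Fermat42Diff (x y z : ℤ) : Prop where
  y_ne_zero : y ≠ 0
  z_ne_zero : z ≠ 0
  isCoprime : IsCoprime x y
  eq : x ^ 4 - y ^ 4 = z ^ 2

namespace Fermat42Diff

variable {x y z : ℤ}

theorem x_ne_zero (h : Fermat42Diff x y z) : x ≠ 0 := by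
  rintro rfl
  have hy := h.y_ne_zero
  have : 0 < y ^ 4 := by positivity
  nlinarith [h.eq, sq_nonneg z]

theorem isCoprime_y_z (h : Fermat42Diff x y z) : IsCoprime y z := by
  have : IsCoprime y (x ^ 4 + y * -y ^ 3) := h.isCoprime.symm.pow_right.add_mul_left_right _
  rw [show x ^ 4 + y * -y ^ 3 = z ^ 2 by linear_combination h.eq] at this
  exact this.of_isCoprime_of_dvd_right (dvd_pow_self z two_ne_zero)

theorem exists_natAbs_lt_of_odd (h : Fermat42Diff x y z) (hy : Odd y) :
    ∃ x' y' z', Fermat42Diff x' y' z' ∧ x'.natAbs < x.natAbs := by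
  have ht : PythagoreanTriple (y ^ 2) z (x ^ 2) := by
    unfold PythagoreanTriple; linear_combination -h.eq
  obtain ⟨m, n, hy2, hz, hx2, hmn, -, -⟩ := ht.coprime_classification'
    (Int.isCoprime_iff_gcd_eq_one.mp h.isCoprime_y_z.pow_left) (Int.odd_iff.mp hy.pow)
    (by have := h.x_ne_zero; positivity)
  have hn : n ≠ 0 := by rintro rfl; exact h.z_ne_zero (by simpa using hz)
  refine ⟨m, n, x * y, ⟨hn, mul_ne_zero h.x_ne_zero h.y_ne_zero,
    Int.isCoprime_iff_gcd_eq_one.mpr hmn, ?_⟩, ?_⟩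
  · linear_combination (-(x ^ 2)) * hy2 - (m ^ 2 - n ^ 2) * hx2
  · rw [Int.natAbs_lt_iff_sq_lt, hx2]
    have : 0 < n ^ 2 := by positivity
    nlinarith

theorem exists_sq_eq_pow_four_add_of_even (h : Fermat42Diff x y z) (hy : Even y) :
    ∃ p q, p ≠ 0 ∧ Odd q ∧ IsCoprime p q ∧ x ^ 2 = q ^ 4 + 4 * p ^ 4 := by
  have hx : Odd x := by
    refine Int.not_even_iff_odd.mp fun hx ↦ ?_
    have := h.isCoprime.isUnit_of_dvd' hx.two_dvd hy.two_dvd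
    simp [Int.isUnit_iff] at this
  have hz : Odd z := by
    rw [← Int.odd_pow' two_ne_zero, ← h.eq]
    exact hx.pow.sub_even (hy.pow_of_ne_zero four_ne_zero)
  have ht : PythagoreanTriple z (y ^ 2) (x ^ 2) := by
    unfold PythagoreanTriple; linear_combination -h.eq
  obtain ⟨m, n, -, hy2, hx2, hmn, hpar, hm0⟩ := ht.coprime_classification'
    (Int.isCoprime_iff_gcd_eq_one.mp h.isCoprime_y_z.symm.pow_right) (Int.odd_iff.mp hz)
    (by have := h.x_ne_zero; positivity)
  obtain ⟨k, rfl⟩ := hy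
  have hk : k ≠ 0 := by rintro rfl; exact h.y_ne_zero (by simp)
  have hmnk : m * n = 2 * k ^ 2 := mul_left_cancel₀ two_ne_zero (by linear_combination -hy2)
  have hmn0 : 0 < m * n := by rw [hmnk]; positivity
  have hm : 0 < m := lt_of_le_of_ne hm0 (by rintro rfl; simp at hmn0)
  have hn : 0 < n := pos_of_mul_pos_right hmn0 hm.le
  have hmn' := Int.isCoprime_iff_gcd_eq_one.mpr hmn
  obtain ⟨a, b, hab, ha, hb, hab0, ha0, hb0, hx2⟩ : ∃ a b, IsCoprime a b ∧ Even a ∧ Odd b ∧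
      a * b = 2 * k ^ 2 ∧ 0 < a ∧ 0 < b ∧ x ^ 2 = a ^ 2 + b ^ 2 := by
    rcases hpar with ⟨hm2, hn2⟩ | ⟨hm2, hn2⟩
    · exact ⟨m, n, hmn', Int.even_iff.mpr hm2, Int.odd_iff.mpr hn2, hmnk, hm, hn, hx2⟩
    · exact ⟨n, m, hmn'.symm, Int.even_iff.mpr hn2, Int.odd_iff.mpr hm2, by linarith [mul_comm m n],
        hn, hm, by linear_combination hx2⟩
  obtain ⟨p, q, hpq, rfl, rfl⟩ := Int.exists_two_mul_sq_of_mul_eq_two_mul_sq hab ha ha0 hb0 hab0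
  exact ⟨p, q, by rintro rfl; simp at ha0, (Int.odd_pow' two_ne_zero).mp hb, hpq,
    by linear_combination hx2⟩

end Fermat42Diff

theorem exists_fermat42Diff_of_sq_eq_pow_four_add {x p q : ℤ} (hp : p ≠ 0) (hq : Odd q)
    (hpq : IsCoprime p q) (h : x ^ 2 = q ^ 4 + 4 * p ^ 4) :
    ∃ e f, Fermat42Diff e f q ∧ e.natAbs < x.natAbs := by
  have hx : x ≠ 0 := by
    rintro rfl
    have : 0 < p ^ 4 := by positivity
    nlinarith [sq_nonneg (q ^ 2)]
  have ht : PythagoreanTriple (q ^ 2) (2 * p ^ 2) |x| := by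
    unfold PythagoreanTriple; rw [abs_mul_abs_self]; linear_combination -h
  have hcop : IsCoprime (q ^ 2) (2 * p ^ 2) :=
    (Int.isCoprime_two_right.mpr hq).pow_left.mul_right hpq.symm.pow
  obtain ⟨r, s, hq2, hp2, hx, hrs, -, hr0⟩ := ht.coprime_classification'
    (Int.isCoprime_iff_gcd_eq_one.mp hcop) (Int.odd_iff.mp hq.pow) (abs_pos.mpr hx)
  have hrs0 : 0 < r * s := by nlinarith [pow_pos (abs_pos.mpr hp) 2, sq_abs p]
  have hr : 0 < r := lt_of_le_of_ne hr0 (by rintro rfl; simp at hrs0)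
  have hs : 0 < s := pos_of_mul_pos_right hrs0 hr.le
  have hrs' := Int.isCoprime_iff_gcd_eq_one.mpr hrs
  have hprs : r * s = p ^ 2 := mul_left_cancel₀ two_ne_zero (by linear_combination -hp2)
  obtain ⟨e, he, rfl⟩ := Int.exists_pos_sq_of_isCoprime hrs' hr hprs
  obtain ⟨f, hf, rfl⟩ := Int.exists_pos_sq_of_isCoprime hrs'.symm hs (by rw [mul_comm]; exact hprs)
  refine ⟨e, f, ⟨hf.ne', by rintro rfl; simp at hq, (IsCoprime.pow_iff two_pos two_pos).mp hrs',
    by linear_combination -hq2⟩, ?_⟩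
  rw [Int.natAbs_lt_iff_sq_lt, ← sq_abs x, hx]
  nlinarith

theorem Fermat42Diff.exists_natAbs_lt {x y z : ℤ} (h : Fermat42Diff x y z) :
    ∃ x' y' z', Fermat42Diff x' y' z' ∧ x'.natAbs < x.natAbs := by
  rcases Int.even_or_odd y with hy | hy
  · obtain ⟨p, q, hp, hq, hpq, hx⟩ := h.exists_sq_eq_pow_four_add_of_even hy
    obtain ⟨e, f, hef, he⟩ := exists_fermat42Diff_of_sq_eq_pow_four_add hp hq hpq hx
    exact ⟨e, f, q, hef, he⟩
  · exact h.exists_natAbs_lt_of_odd hy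

theorem not_fermat42Diff {x y z : ℤ} : ¬Fermat42Diff x y z := fun h ↦
  have ⟨_, _, _, h', _⟩ := h.exists_natAbs_lt
  not_fermat42Diff h'
termination_by x.natAbs

theorem Int.sq_ne_mul_mul_sq_sub_sq_of_isCoprime {u v w : ℤ} (huv : IsCoprime u v) (hw : w ≠ 0) :
    w ^ 2 ≠ u * v * (u ^ 2 - v ^ 2) := by
  intro h
  have hu : IsCoprime u (u ^ 2 - v ^ 2) := by
    simpa [sub_eq_neg_add, ← sq] using (huv.pow_right (n := 2)).neg_right.add_mul_left_right u
  have hv : IsCoprime v (u ^ 2 - v ^ 2) := by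
    simpa [sub_eq_add_neg, ← sq] using (huv.symm.pow_right (n := 2)).add_mul_left_right (-v)
  obtain ⟨a, ha⟩ := Int.exists_sq_eq_pow_four_of_isCoprime (hu.mul_right huv)
    (c := w) (by linear_combination -h)
  obtain ⟨b, hb⟩ := Int.exists_sq_eq_pow_four_of_isCoprime (hv.mul_right huv.symm)
    (c := w) (by linear_combination -h)
  obtain ⟨t, ht⟩ := Int.sq_of_isCoprime (hu.symm.mul_right hv.symm)
    (c := w) (by linear_combination -h)
  have hne : u * v * (u ^ 2 - v ^ 2) ≠ 0 := h ▸ pow_ne_zero 2 hw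
  simp only [ne_eq, mul_eq_zero, not_or] at hne
  obtain ⟨⟨hu0, hv0⟩, huv0⟩ := hne
  have ha0 : a ≠ 0 := by rintro rfl; simp [hu0] at ha
  have hb0 : b ≠ 0 := by rintro rfl; simp [hv0] at hb
  have ht0 : t ≠ 0 := by rintro rfl; simp [huv0] at ht
  have hab : IsCoprime a b := (IsCoprime.pow_iff four_pos four_pos).mp (ha ▸ hb ▸ huv.pow)
  rcases ht with ht | ht
  · exact not_fermat42Diff ⟨hb0, ht0, hab, by rw [← ha, ← hb, ht]⟩
  · exact not_fermat42Diff ⟨ha0, ht0, hab.symm, by linear_combination ha - hb - ht⟩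

theorem Int.sq_ne_mul_mul_sq_sub_sq {u v w : ℤ} (hw : w ≠ 0) : w ^ 2 ≠ u * v * (u ^ 2 - v ^ 2) := by
  intro h
  have hu : u ≠ 0 := by rintro rfl; simp [hw] at h
  obtain ⟨g, u, v, hg, huv, rfl, rfl⟩ := Int.exists_gcd_one' (Int.gcd_pos_of_ne_zero_left v hu)
  obtain ⟨w, rfl⟩ : (g : ℤ) ^ 2 ∣ w := (Int.pow_dvd_pow_iff two_ne_zero).mp
    ⟨u * v * (u ^ 2 - v ^ 2), by rw [h]; ring⟩
  refine Int.sq_ne_mul_mul_sq_sub_sq_of_isCoprime (Int.isCoprime_iff_gcd_eq_one.mpr huv)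
    (right_ne_zero_of_mul hw) (mul_left_cancel₀ (pow_ne_zero 4 (by positivity : (g : ℤ) ≠ 0)) ?_)
  linear_combination h

theorem stmt_5 (u v w : ℤ) (h : w^2 = u * v * (u^2 - v^2)) :
    w = 0 ∧ (v = u ∨ v = -u ∨ u = 0 ∨ v = 0) := by
  obtain rfl : w = 0 := by_contra fun hw ↦ Int.sq_ne_mul_mul_sq_sub_sq hw h
  refine ⟨rfl, ?_⟩
  have : u * v * ((u - v) * (u + v)) = 0 := by linear_combination -h
  simp only [mul_eq_zero, sub_eq_zero, add_eq_zero_iff_eq_neg] at this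
  omega
end

section
/- The only integer solutions (u, v, w) of −w² = u·v·(u² − v²) are those with w = 0, namely (u, v, w) = (a, a, 0), (a, −a, 0), (0, v, 0), or (u, 0, 0). -/
/-!
Dividing by `gcd u v` we may assume `u, v` coprime. Then `u`, `v` and `v² - u²` are pairwise
coprime with product `±w²`, so `|u| = a²`, `|v| = b²` and `b⁴ - a⁴ = ±s²`, which Fermat's descent
rules out unless `w = 0`: if `x⁴ - y⁴ = z²` with `x, y` coprime and `y z ≠ 0`, then `(y², z, x²)`
(for odd `y`) or `(z, y², x²)` (for even `y`) is a primitive Pythagorean triple, and its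
parametrisation produces a solution with smaller `|x|`.
-/

theorem Int.exists_eq_pow_of_mul_eq_pow_of_nonneg {a b c : ℤ} (hab : IsCoprime a b) (ha : 0 ≤ a)
    {k : ℕ} (h : a * b = c ^ k) : ∃ d, a = d ^ k := by
  obtain ⟨d, hd⟩ := exists_associated_pow_of_mul_eq_pow' hab h
  rw [Int.associated_iff_natAbs, Int.natAbs_pow] at hd
  exact ⟨d.natAbs, by rw [← Int.natAbs_of_nonneg ha, ← hd]; push_cast; rfl⟩

theorem Int.exists_eq_sq_mul_of_sq_eq_pow_four_mul {g z a : ℤ} (hg : g ≠ 0)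
    (h : z ^ 2 = g ^ 4 * a) : ∃ z', z = g ^ 2 * z' ∧ z' ^ 2 = a := by
  obtain ⟨z', rfl⟩ : g ^ 2 ∣ z :=
    (Int.pow_dvd_pow_iff two_ne_zero).mp ⟨a, by rw [h]; ring⟩
  refine ⟨z', rfl, mul_left_cancel₀ (pow_ne_zero 4 hg) ?_⟩
  linear_combination h

/-- The analogue of `Fermat42` for `x⁴ - y⁴ = z²`. -/
def Fermat42Sub (x y z : ℤ) : Prop :=
  y ≠ 0 ∧ z ≠ 0 ∧ x ^ 4 - y ^ 4 = z ^ 2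

namespace Fermat42Sub

variable {x y z : ℤ}

theorem left_ne_zero (h : Fermat42Sub x y z) : x ≠ 0 := by
  obtain ⟨hy, hz, h⟩ := h
  rintro rfl
  nlinarith [pow_pos (sq_pos_of_ne_zero hy) 2, sq_pos_of_ne_zero hz]

theorem of_mul {g : ℤ} (hg : g ≠ 0) (h : Fermat42Sub (x * g) (y * g) z) :
    ∃ z', Fermat42Sub x y z' := by
  obtain ⟨hy, hz, h⟩ := h
  obtain ⟨z', rfl, hz'⟩ :=
    Int.exists_eq_sq_mul_of_sq_eq_pow_four_mul hg (z := z) (a := x ^ 4 - y ^ 4)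
      (by linear_combination -h)
  exact ⟨z', left_ne_zero_of_mul hy, right_ne_zero_of_mul hz, hz'.symm⟩

theorem exists_isCoprime (h : Fermat42Sub x y z) :
    ∃ x' y' z', Fermat42Sub x' y' z' ∧ IsCoprime x' y' ∧ x'.natAbs ≤ x.natAbs := by
  obtain ⟨g, x', y', hg, hco, rfl, rfl⟩ :=
    Int.exists_gcd_one' (Int.gcd_pos_of_ne_zero_left y h.left_ne_zero)
  obtain ⟨z', h'⟩ := of_mul (by positivity) h
  refine ⟨x', y', z', h', Int.isCoprime_iff_gcd_eq_one.mpr hco, ?_⟩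
  rw [Int.natAbs_mul]
  exact Nat.le_mul_of_pos_right _ (by simpa using hg)

theorem isCoprime_right (h : Fermat42Sub x y z) (hxy : IsCoprime x y) : IsCoprime y z := by
  have : IsCoprime y (x ^ 4 + y * -y ^ 3) := (hxy.symm.pow_right (n := 4)).add_mul_left_right _
  rw [show x ^ 4 + y * -y ^ 3 = z * z by linear_combination h.2.2] at this
  exact this.of_mul_right_left

theorem exists_natAbs_lt_of_sq_eq_pow_four_add_four_mul_pow_four {s t : ℤ} (hx : 0 ≤ x)
    (hs : Odd s) (ht : t ≠ 0) (hst : IsCoprime s t) (h : x ^ 2 = s ^ 4 + 4 * t ^ 4) :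
    ∃ x' y' z', Fermat42Sub x' y' z' ∧ x'.natAbs < x.natAbs := by
  have hs0 : s ≠ 0 := by rintro rfl; simp at hs
  have hsx : s ^ 2 < x :=
    lt_of_pow_lt_pow_left₀ 2 hx (by nlinarith [pow_pos (sq_pos_of_ne_zero ht) 2])
  have hxodd : Odd x := by
    rw [← Int.odd_pow' two_ne_zero, h]
    exact hs.pow.add_even ⟨2 * t ^ 4, by ring⟩
  -- `x - s² = 2p` and `x + s² = 2(p + s²)` have product `4t⁴` and coprime halves,
  -- so both halves are fourth powers.
  obtain ⟨p, hp⟩ : Even (x - s ^ 2) := hxodd.sub_odd hs.pow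
  have hpq : p * (p + s ^ 2) = t ^ 4 :=
    mul_left_cancel₀ (four_ne_zero (α := ℤ)) (by linear_combination h - (x + s ^ 2 + 2 * p) * hp)
  have hp0 : 0 < p := by linarith
  have hcop : IsCoprime p (p + s ^ 2) := by
    have : IsCoprime p (s ^ 2) := (hst.symm.pow (m := 4)).of_isCoprime_of_dvd_left ⟨_, hpq.symm⟩
    simpa [add_comm] using this.add_mul_left_right 1
  obtain ⟨f, rfl⟩ := Int.exists_eq_pow_of_mul_eq_pow_of_nonneg hcop hp0.le hpq
  obtain ⟨g, hg⟩ := Int.exists_eq_pow_of_mul_eq_pow_of_nonneg hcop.symm (by positivity)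
    (by rw [mul_comm]; exact hpq)
  have hf : f ≠ 0 := by rintro rfl; simp at hp0
  refine ⟨g, f, s, ⟨hf, hs0, by linear_combination -hg⟩, Int.natAbs_lt_iff_sq_lt.mpr ?_⟩
  have hg4 : g ^ 4 ≤ t ^ 4 := by
    rw [← hpq, ← hg]; exact le_mul_of_one_le_left (by positivity) hp0
  -- `g² ≤ g⁴ ≤ t⁴ < x²`
  nlinarith [pow_pos (sq_pos_of_ne_zero hs0) 2, sq_nonneg g, sq_nonneg (g ^ 2 - 1)]

theorem exists_natAbs_lt_of_odd (h : Fermat42Sub x y z) (hxy : IsCoprime x y) (hy : Odd y) :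
    ∃ x' y' z', Fermat42Sub x' y' z' ∧ x'.natAbs < x.natAbs := by
  have hx0 := h.left_ne_zero
  have ht : PythagoreanTriple (y ^ 2) z (x ^ 2) := by
    unfold PythagoreanTriple; linear_combination -h.2.2
  obtain ⟨m, n, hy2, hz, hx2, -⟩ := ht.coprime_classification'
    (Int.isCoprime_iff_gcd_eq_one.mp (h.isCoprime_right hxy).pow_left) (Int.odd_iff.mp hy.pow)
    (by positivity)
  have hn : n ≠ 0 := by rintro rfl; exact h.2.1 (by simpa using hz)
  refine ⟨m, n, x * y, ⟨hn, mul_ne_zero hx0 h.1, ?_⟩, Int.natAbs_lt_iff_sq_lt.mpr ?_⟩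
  · linear_combination -(m ^ 2 + n ^ 2) * hy2 - y ^ 2 * hx2
  · linarith [sq_pos_of_ne_zero hn]

theorem exists_natAbs_lt_of_two_mul_mul_eq_sq {m n y : ℤ} (hmn : IsCoprime m n) (hm : 0 ≤ m)
    (hn : 0 ≤ n) (hm2 : Even m) (hy : y ≠ 0) (hmny : 2 * m * n = y ^ 2)
    (hx : x ^ 2 = m ^ 2 + n ^ 2) :
    ∃ x' y' z', Fermat42Sub x' y' z' ∧ x'.natAbs < x.natAbs := by
  obtain ⟨m, rfl⟩ := hm2
  obtain ⟨y, rfl⟩ : Even y :=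
    (Int.even_pow' two_ne_zero).mp ⟨2 * m * n, by linear_combination -hmny⟩
  have hmny' : m * n = y ^ 2 :=
    mul_left_cancel₀ (four_ne_zero (α := ℤ)) (by linear_combination hmny)
  have hco : IsCoprime m n := (show IsCoprime (2 * m) n by rwa [two_mul]).of_mul_left_right
  obtain ⟨a, rfl⟩ := Int.exists_eq_pow_of_mul_eq_pow_of_nonneg hco (by linarith) hmny'
  obtain ⟨b, rfl⟩ := Int.exists_eq_pow_of_mul_eq_pow_of_nonneg hco.symm hn
    (by rw [mul_comm]; exact hmny')
  have hb : Odd b := by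
    rw [← Int.odd_pow' two_ne_zero, ← Int.isCoprime_two_left]
    exact hmn.of_isCoprime_of_dvd_left ⟨a ^ 2, by ring⟩
  have ha : a ≠ 0 := by
    rintro rfl
    obtain rfl : y = 0 := pow_eq_zero_iff two_ne_zero |>.mp (by simpa using hmny'.symm)
    simp at hy
  simpa only [Int.natAbs_abs] using exists_natAbs_lt_of_sq_eq_pow_four_add_four_mul_pow_four
    (abs_nonneg x) hb ha ((IsCoprime.pow_iff two_pos two_pos).mp hco.symm)
    (by rw [sq_abs, hx]; ring)

theorem exists_natAbs_lt_of_even (h : Fermat42Sub x y z) (hxy : IsCoprime x y) (hy : Even y) :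
    ∃ x' y' z', Fermat42Sub x' y' z' ∧ x'.natAbs < x.natAbs := by
  have hx : Odd x :=
    Int.isCoprime_two_right.mp (hxy.of_isCoprime_of_dvd_right (even_iff_two_dvd.mp hy))
  have hz : Odd z := by
    rw [← Int.odd_pow' two_ne_zero, ← h.2.2]
    exact hx.pow.sub_even (hy.pow_of_ne_zero four_ne_zero)
  have ht : PythagoreanTriple z (y ^ 2) (x ^ 2) := by
    unfold PythagoreanTriple; linear_combination -h.2.2
  obtain ⟨m, n, -, hy2, hx2, hmn, hpar, hm⟩ := ht.coprime_classification'
    (Int.isCoprime_iff_gcd_eq_one.mp (h.isCoprime_right hxy).symm.pow_right) (Int.odd_iff.mp hz)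
    (by positivity [h.left_ne_zero])
  have hmn := Int.isCoprime_iff_gcd_eq_one.mpr hmn
  have hn : 0 ≤ n := by nlinarith [sq_pos_of_ne_zero h.1]
  rcases hpar with ⟨hm2, -⟩ | ⟨-, hn2⟩
  · exact exists_natAbs_lt_of_two_mul_mul_eq_sq hmn hm hn (Int.even_iff.mpr hm2) h.1 hy2.symm hx2
  · exact exists_natAbs_lt_of_two_mul_mul_eq_sq hmn.symm hn hm (Int.even_iff.mpr hn2) h.1
      (by linear_combination hy2.symm) (by linear_combination hx2)

theorem exists_natAbs_lt (h : Fermat42Sub x y z) :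
    ∃ x' y' z', Fermat42Sub x' y' z' ∧ x'.natAbs < x.natAbs := by
  obtain ⟨x', y', z', h', hco, hle⟩ := h.exists_isCoprime
  obtain ⟨x'', y'', z'', h'', hlt⟩ := (Int.even_or_odd y').elim
    (h'.exists_natAbs_lt_of_even hco) (h'.exists_natAbs_lt_of_odd hco)
  exact ⟨x'', y'', z'', h'', hlt.trans_le hle⟩

end Fermat42Sub

theorem not_fermat42Sub (x y z : ℤ) : ¬Fermat42Sub x y z := fun h =>
  have ⟨x', y', z', h', _⟩ := h.exists_natAbs_lt
  not_fermat42Sub x' y' z' h'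
termination_by x.natAbs

theorem eq_zero_of_sq_eq_mul_mul_sq_sub_sq_of_isCoprime {u v w : ℤ} (hco : IsCoprime u v)
    (h : w ^ 2 = u * v * (v ^ 2 - u ^ 2)) : w = 0 := by
  by_contra hw
  obtain ⟨⟨hu, hv⟩, hD⟩ : (u ≠ 0 ∧ v ≠ 0) ∧ v ^ 2 - u ^ 2 ≠ 0 := by
    rw [← mul_ne_zero_iff, ← mul_ne_zero_iff, ← h]; exact pow_ne_zero 2 hw
  have hcoD : IsCoprime (u * v) (v ^ 2 - u ^ 2) := by
    refine IsCoprime.mul_left ?_ ?_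
    · rw [show v ^ 2 - u ^ 2 = v ^ 2 + u * -u by ring]
      exact (hco.pow_right (n := 2)).add_mul_left_right (-u)
    · rw [show v ^ 2 - u ^ 2 = -u ^ 2 + v * v by ring]
      exact (hco.symm.pow_right (n := 2)).neg_right.add_mul_left_right v
  have habs : |u * v| * |v ^ 2 - u ^ 2| = w ^ 2 := by rw [← abs_mul, ← h, abs_sq]
  obtain ⟨r, hr⟩ := Int.exists_eq_pow_of_mul_eq_pow_of_nonneg hcoD.abs_abs (abs_nonneg _) habs
  obtain ⟨s, hs⟩ := Int.exists_eq_pow_of_mul_eq_pow_of_nonneg hcoD.abs_abs.symm (abs_nonneg _)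
    (by rw [mul_comm]; exact habs)
  rw [abs_mul] at hr
  obtain ⟨a, ha⟩ := Int.exists_eq_pow_of_mul_eq_pow_of_nonneg hco.abs_abs (abs_nonneg _) hr
  obtain ⟨b, hb⟩ := Int.exists_eq_pow_of_mul_eq_pow_of_nonneg hco.abs_abs.symm (abs_nonneg _)
    (by rw [mul_comm]; exact hr)
  have ha4 : u ^ 2 = a ^ 4 := by rw [← sq_abs, ha]; ring
  have hb4 : v ^ 2 = b ^ 4 := by rw [← sq_abs, hb]; ring
  have ha0 : a ≠ 0 := by rintro rfl; simp_all
  have hb0 : b ≠ 0 := by rintro rfl; simp_all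
  have hs0 : s ≠ 0 := by rintro rfl; simp_all
  rcases (abs_eq (sq_nonneg s)).mp hs with hD | hD
  · exact not_fermat42Sub b a s ⟨ha0, hs0, by linear_combination hD - hb4 + ha4⟩
  · exact not_fermat42Sub a b s ⟨hb0, hs0, by linear_combination -hD - ha4 + hb4⟩

theorem eq_zero_of_sq_eq_mul_mul_sq_sub_sq {u v w : ℤ} (h : w ^ 2 = u * v * (v ^ 2 - u ^ 2)) :
    w = 0 := by
  rcases eq_or_ne u 0 with rfl | hu
  · simpa using h
  obtain ⟨g, u, v, hg, hco, rfl, rfl⟩ := Int.exists_gcd_one' (Int.gcd_pos_of_ne_zero_left v hu)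
  obtain ⟨w', rfl, hw'⟩ := Int.exists_eq_sq_mul_of_sq_eq_pow_four_mul (g := g)
    (a := u * v * (v ^ 2 - u ^ 2)) (by positivity) (h.trans (by ring))
  rw [eq_zero_of_sq_eq_mul_mul_sq_sub_sq_of_isCoprime (Int.isCoprime_iff_gcd_eq_one.mpr hco) hw',
    mul_zero]

theorem stmt_6 (u v w : ℤ) (h : -w^2 = u * v * (u^2 - v^2)) :
    w = 0 ∧ (v = u ∨ v = -u ∨ u = 0 ∨ v = 0) := by
  obtain rfl : w = 0 := eq_zero_of_sq_eq_mul_mul_sq_sub_sq (u := u) (v := v)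
    (by linear_combination -h)
  have : u * v * ((v - u) * (v + u)) = 0 := by linear_combination h
  simp only [mul_eq_zero, sub_eq_zero, add_eq_zero_iff_eq_neg] at this
  exact ⟨rfl, by tauto⟩
end

section
/- If x and y are coprime odd integers and z is an integer with x² + y² = 2z², then there exist coprime integers r and s such that (up to signs) x = r² + 2rs − s², y = r² − 2rs − s², and z = ±(r² + s²). -/
theorem stmt_8 (x y z : ℤ) (hco : IsCoprime x y) (hx : Odd x) (hy : Odd y)
    (h : x^2 + y^2 = 2 * z^2) :
    ∃ r s : ℤ, IsCoprime r s ∧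
      (x = r^2 + 2*r*s - s^2 ∨ x = -(r^2 + 2*r*s - s^2)) ∧
      (y = r^2 - 2*r*s - s^2 ∨ y = -(r^2 - 2*r*s - s^2)) ∧
      (z = r^2 + s^2 ∨ z = -(r^2 + s^2)) := by
  obtain ⟨a, ha⟩ := hx
  obtain ⟨b, hb⟩ := hy
  set u : ℤ := a + b + 1 with hu
  set v : ℤ := a - b with hv
  have hxu : x = u + v := by omega
  have hyu : y = u - v := by omega
  have hpt : PythagoreanTriple u v z := by
    show u * u + v * v = z * z
    have h2 : 2 * (u * u + v * v) = 2 * (z * z) := by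
      subst ha hb; simp only [hu, hv]; linear_combination h
    linarith
  have hcop : IsCoprime u v := by
    obtain ⟨p, q, hpq⟩ := hco
    exact ⟨p + q, p - q, by linear_combination hpq - p * hxu - q * hyu⟩
  have hgcd : Int.gcd u v = 1 := Int.isCoprime_iff_gcd_eq_one.mp hcop
  obtain ⟨m, n, h1, h2, h3, _⟩ :=
    PythagoreanTriple.coprime_classification.mp ⟨hpt, hgcd⟩
  refine ⟨m, n, Int.isCoprime_iff_gcd_eq_one.mpr h3, ?_, ?_, h2⟩
  · rcases h1 with ⟨h1a, h1b⟩ | ⟨h1a, h1b⟩ <;>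
      [left; left] <;> rw [hxu, h1a, h1b] <;> ring
  · rcases h1 with ⟨h1a, h1b⟩ | ⟨h1a, h1b⟩
    · left; rw [hyu, h1a, h1b]; ring
    · right; rw [hyu, h1a, h1b]; ring
end

section
/- There are no integers r, s, y with gcd(r, s) = 1 and rs ≠ 0 such that y² = −(−s⁴ + r²s² + 2r⁴), i.e., the equation y² = s⁴ − r²s² − 2r⁴ has no solution in coprime integers r, s with rs ≠ 0. -/
/-- Build coprimality from absence of common prime factors. -/
lemma aux_isCoprime_of_forall_prime {m n : ℤ} (h0 : m ≠ 0 ∨ n ≠ 0)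
    (H : ∀ p : ℕ, p.Prime → (p:ℤ) ∣ m → (p:ℤ) ∣ n → False) : IsCoprime m n := by
  rw [Int.isCoprime_iff_gcd_eq_one]
  by_contra hg
  have hgz : Int.gcd m n ≠ 0 := by
    intro hz
    rw [Int.gcd_eq_zero_iff] at hz
    obtain ⟨rfl, rfl⟩ := hz; tauto
  have hp := Nat.minFac_prime hg
  have hd : ((Int.gcd m n).minFac : ℤ) ∣ (Int.gcd m n : ℤ) :=
    Int.natCast_dvd_natCast.mpr (Nat.minFac_dvd _)
  exact H _ hp (hd.trans (Int.gcd_dvd_left m n)) (hd.trans (Int.gcd_dvd_right m n))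

/-- A common prime divisor contradicts coprimality. -/
lemma aux_prime_not_coprime {r s : ℤ} (hco : IsCoprime r s) {p : ℕ} (hp : p.Prime)
    (h1 : (p:ℤ) ∣ r) (h2 : (p:ℤ) ∣ s) : False := by
  have hu := hco.isUnit_of_dvd' h1 h2
  rw [Int.isUnit_iff] at hu
  have := hp.two_le
  rcases hu with hu | hu <;> omega

/-- Odd squares are 1 mod 8. -/
lemma aux_odd_sq {c : ℤ} (h : ¬ (2:ℤ) ∣ c) : ∃ m, c^2 = 8*m+1 := by
  obtain ⟨t, ht⟩ : ∃ t, c = 2*t+1 := by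
    refine ⟨(c-1)/2, ?_⟩; omega
  obtain ⟨m, hm⟩ := Int.even_mul_succ_self t
  exact ⟨m, by rw [ht]; linear_combination 4 * hm⟩

/-- Even squares are divisible by 4. -/
lemma aux_even_sq {c : ℤ} (h : (2:ℤ) ∣ c) : ∃ m, c^2 = 4*m := by
  obtain ⟨t, rfl⟩ := h
  exact ⟨t^2, by ring⟩

lemma aux_sq_cases (c : ℤ) : (∃ m, c^2 = 4*m) ∨ (∃ m, c^2 = 8*m+1) := by
  by_cases h : (2:ℤ) ∣ c
  · exact Or.inl (aux_even_sq h)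
  · exact Or.inr (aux_odd_sq h)

/-- If 3 divides x²+y² then 3 divides both. -/
lemma aux_three_dvd {x y : ℤ} (h : (3:ℤ) ∣ x^2 + y^2) : (3:ℤ) ∣ x ∧ (3:ℤ) ∣ y := by
  have hx : ((x : ZMod 3))^2 + (y:ZMod 3)^2 = 0 := by
    have : (((x^2+y^2 : ℤ)) : ZMod 3) = 0 := by
      rw [ZMod.intCast_zmod_eq_zero_iff_dvd]; exact_mod_cast h
    push_cast at this; exact this
  have key : ∀ u v : ZMod 3, u^2+v^2 = 0 → u = 0 ∧ v = 0 := by decide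
  obtain ⟨h1, h2⟩ := key _ _ hx
  rw [ZMod.intCast_zmod_eq_zero_iff_dvd] at h1 h2
  exact ⟨by exact_mod_cast h1, by exact_mod_cast h2⟩

lemma aux_natAbs_lt {a b : ℤ} (h : a^2 < b^2) : a.natAbs < b.natAbs := by
  have h1 : (a^2).natAbs < (b^2).natAbs :=
    Int.natAbs_lt_natAbs_of_nonneg_of_lt (sq_nonneg a) h
  rw [Int.natAbs_pow, Int.natAbs_pow] at h1
  exact lt_of_pow_lt_pow_left₀ 2 (Nat.zero_le _) h1

/-- prime dividing 2k with p ≠ 2 divides k -/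
lemma aux_prime_dvd_two_mul {p : ℕ} (hp : p.Prime) {k : ℤ} (h : (p:ℤ) ∣ 2*k)
    (hne : p ≠ 2) : (p:ℤ) ∣ k := by
  have hpz := Nat.prime_iff_prime_int.mp hp
  rcases hpz.dvd_mul.mp h with h2 | hk
  · exfalso
    have : (p:ℤ) ∣ ((2:ℕ):ℤ) := by exact_mod_cast h2
    rw [Int.natCast_dvd_natCast] at this
    exact hne ((Nat.prime_dvd_prime_iff_eq hp Nat.prime_two).mp this)
  · exact hk

/-- Inner parametrization: uv = 2c², coprime, u even, s = u+v. -/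
lemma aux_param_inner (c s u v : ℤ) (hc : c ≠ 0) (hcop : IsCoprime u v)
    (huv : u * v = 2*c^2) (hs : s = u + v) (hu : (2:ℤ) ∣ u) :
    ∃ e f, IsCoprime e f ∧ ¬ (2:ℤ) ∣ f ∧ s^2 = (2*e^2+f^2)^2 ∧ c^2 = e^2*f^2 := by
  obtain ⟨w, rfl⟩ := hu
  have hwv : w * v = c^2 := by
    have h2 : 2*(w*v) = 2*(c^2) := by linear_combination huv
    exact mul_left_cancel₀ two_ne_zero h2
  have hcop' : IsCoprime w v := hcop.of_mul_left_right
  have hvodd : ¬ (2:ℤ) ∣ v := by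
    intro h2v
    exact aux_prime_not_coprime hcop Nat.prime_two (by push_cast; exact Dvd.intro w rfl) (by exact_mod_cast h2v)
  obtain ⟨e, he⟩ := Int.sq_of_isCoprime hcop' hwv
  obtain ⟨f, hf⟩ := Int.sq_of_isCoprime (c := c) hcop'.symm (show v * w = c^2 by linear_combination hwv)
  have hef : IsCoprime e f := by
    have h1 : e ∣ w := by rcases he with h | h <;> rw [h] <;> [exact ⟨e, by ring⟩; exact ⟨-e, by ring⟩]
    have h2 : f ∣ v := by rcases hf with h | h <;> rw [h] <;> [exact ⟨f, by ring⟩; exact ⟨-f, by ring⟩]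
    exact ((hcop'.of_isCoprime_of_dvd_left h1).of_isCoprime_of_dvd_right h2)
  have hfodd : ¬ (2:ℤ) ∣ f := by
    intro h2f
    apply hvodd
    have hff : (2:ℤ) ∣ f^2 := dvd_pow h2f (by norm_num)
    rcases hf with h | h <;> rw [h]
    · exact hff
    · exact hff.neg_right
  have hcpos : (0:ℤ) < c^2 := by positivity
  rcases he with he | he <;> rcases hf with hf | hf
  · refine ⟨e, f, hef, hfodd, ?_, by rw [← hwv, he, hf]⟩
    rw [hs, he, hf]
  · exfalso
    have hneg : c^2 = -(e*f)^2 := by rw [← hwv, he, hf]; ring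
    nlinarith [sq_nonneg (e*f)]
  · exfalso
    have hneg : c^2 = -(e*f)^2 := by rw [← hwv, he, hf]; ring
    nlinarith [sq_nonneg (e*f)]
  · refine ⟨e, f, hef, hfodd, ?_, by rw [← hwv, he, hf]; ring⟩
    rw [hs, he, hf]; ring

lemma aux_param (r s b : ℤ) (hr : r ≠ 0) (hs : ¬ (2:ℤ) ∣ s) (hco : IsCoprime r s)
    (h2 : s^2 - 2*r^2 = b^2) :
    ∃ e f, IsCoprime e f ∧ ¬ (2:ℤ) ∣ f ∧ s^2 = (2*e^2+f^2)^2 ∧ r^2 = 4*e^2*f^2 := by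
  obtain ⟨m, hm⟩ := aux_odd_sq hs
  -- b is odd
  have hbodd : ¬ (2:ℤ) ∣ b := by
    intro hb
    obtain ⟨t, ht⟩ := aux_even_sq hb
    rcases aux_sq_cases r with ⟨n, hn⟩ | ⟨n, hn⟩ <;>
    · rw [hm, hn] at h2; rw [ht] at h2; omega
  obtain ⟨k, hk⟩ := aux_odd_sq hbodd
  -- r is even
  have hreven : (2:ℤ) ∣ r := by
    rcases aux_sq_cases r with ⟨n, hn⟩ | ⟨n, hn⟩
    · have h4 : (2:ℤ) ∣ r^2 := by rw [hn]; exact ⟨2*n, by ring⟩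
      exact Int.prime_two.dvd_of_dvd_pow h4
    · rw [hm, hn, hk] at h2; omega
  obtain ⟨c, hc⟩ : ∃ c, r = 2*c := ⟨r/2, by omega⟩
  have hcne : c ≠ 0 := by intro h; apply hr; rw [hc, h]; ring
  -- halves
  obtain ⟨u, hu⟩ : ∃ u, s - b = 2*u := ⟨(s-b)/2, by omega⟩
  obtain ⟨v, hv⟩ : ∃ v, s + b = 2*v := ⟨(s+b)/2, by omega⟩
  have hsuv : s = u + v := by omega
  have hbuv : b = v - u := by omega
  have huv : u * v = 2*c^2 := by
    have h4 : 4*(u*v) = 4*(2*c^2) := by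
      linear_combination -((s+b)*hu) - 2*u*hv + h2 + (2*r+4*c)*hc
    linarith
  have hcopuv : IsCoprime u v := by
    apply aux_isCoprime_of_forall_prime
    · by_contra hcon
      push_neg at hcon
      obtain ⟨h1, h1'⟩ := hcon
      apply hs; rw [hsuv, h1, h1']; exact ⟨0, by ring⟩
    · intro p hp hpu hpv
      have hps : (p:ℤ) ∣ s := by rw [hsuv]; exact dvd_add hpu hpv
      by_cases hp2 : p = 2
      · subst hp2; apply hs; exact_mod_cast hps
      · have hpb : (p:ℤ) ∣ b := by rw [hbuv]; exact dvd_sub hpv hpu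
        have hpr2 : (p:ℤ) ∣ 2*r^2 := by
          have : 2*r^2 = s^2 - b^2 := by linear_combination -h2
          rw [this]
          exact dvd_sub (dvd_pow hps (by norm_num)) (dvd_pow hpb (by norm_num))
        have hpr : (p:ℤ) ∣ r :=
          (Nat.prime_iff_prime_int.mp hp).dvd_of_dvd_pow (aux_prime_dvd_two_mul hp hpr2 hp2)
        exact aux_prime_not_coprime hco hp hpr hps
  have hr2 : r^2 = 4*c^2 := by rw [hc]; ring
  have h2uv : (2:ℤ) ∣ u * v := by rw [huv]; exact ⟨c^2, rfl⟩
  rcases (Int.prime_two.dvd_mul.mp h2uv) with h2u | h2v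
  · obtain ⟨e, f, h1, h2', h3, h4⟩ := aux_param_inner c s u v hcne hcopuv huv hsuv h2u
    exact ⟨e, f, h1, h2', h3, by rw [hr2, h4]; ring⟩
  · obtain ⟨e, f, h1, h2', h3, h4⟩ := aux_param_inner c s v u hcne hcopuv.symm
      (by linear_combination huv) (by omega) h2v
    exact ⟨e, f, h1, h2', h3, by rw [hr2, h4]; ring⟩

lemma aux_quartic (e f P Q : ℤ) (hf : ¬ (2:ℤ) ∣ f) (hPodd : ¬ (2:ℤ) ∣ P)
    (hPQ : P*Q = 3*f^4) (hsum : P+Q = 4*(e^2+f^2)) (hP3 : (3:ℤ) ∣ P)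
    (hPpos : 0 < P) (hQpos : 0 < Q) (hcop : IsCoprime P Q) :
    ∃ c d, IsCoprime c d ∧ ¬ (2:ℤ) ∣ c ∧ ¬ (2:ℤ) ∣ d ∧ f^2 = c^2*d^2 ∧
      3*c^4 + d^4 = 4*e^2 + 4*c^2*d^2 := by
  obtain ⟨P', rfl⟩ := hP3
  have hP'pos : 0 < P' := by nlinarith
  have hP'Q : P' * Q = (f^2)^2 := by
    have h3 : 3*(P'*Q) = 3*((f^2)^2) := by linear_combination hPQ
    exact mul_left_cancel₀ (by norm_num) h3
  have hcop' : IsCoprime P' Q := hcop.of_mul_left_right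
  obtain ⟨g, hg⟩ := Int.sq_of_isCoprime hcop' hP'Q
  obtain ⟨q, hq⟩ := Int.sq_of_isCoprime (c := f^2) hcop'.symm (by linear_combination hP'Q)
  have hg' : P' = g^2 := by
    rcases hg with h | h
    · exact h
    · exfalso; nlinarith [sq_nonneg g]
  have hq' : Q = q^2 := by
    rcases hq with h | h
    · exact h
    · exfalso; nlinarith [sq_nonneg q]
  have hgq : IsCoprime g q := by
    have h1 : g ∣ P' := by rw [hg']; exact ⟨g, sq g⟩
    have h2 : q ∣ Q := by rw [hq']; exact ⟨q, sq q⟩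
    exact (hcop'.of_isCoprime_of_dvd_left h1).of_isCoprime_of_dvd_right h2
  have hcases : g*q = f^2 ∨ g*q = -(f^2) := by
    have h0 : (g*q - f^2) * (g*q + f^2) = 0 := by
      have : (g*q)^2 = (f^2)^2 := by rw [← hP'Q, hg', hq']; ring
      linear_combination this
    rcases mul_eq_zero.mp h0 with h | h
    · left; linarith
    · right; linarith
  have key : ∃ c d, (g = c^2 ∨ g = -c^2) ∧ (q = d^2 ∨ q = -d^2) := by
    rcases hcases with h | h
    · obtain ⟨c, hcc⟩ := Int.sq_of_isCoprime hgq h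
      obtain ⟨d, hdd⟩ := Int.sq_of_isCoprime (c := f) hgq.symm (by linear_combination h)
      exact ⟨c, d, hcc, hdd⟩
    · have h' : (-g) * q = f^2 := by linear_combination -h
      obtain ⟨c, hcc⟩ := Int.sq_of_isCoprime hgq.neg_left h'
      obtain ⟨d, hdd⟩ := Int.sq_of_isCoprime (c := f) hgq.symm.neg_right (by linear_combination h')
      refine ⟨c, d, ?_, hdd⟩
      rcases hcc with h1 | h1
      · right; linarith
      · left; linarith
  obtain ⟨c, d, hcc, hdd⟩ := key
  have hc4 : P' = c^4 := by rcases hcc with h | h <;> rw [hg', h] <;> ring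
  have hd4 : Q = d^4 := by rcases hdd with h | h <;> rw [hq', h] <;> ring
  have hcd : IsCoprime c d := by
    have h1 : c ∣ g := by rcases hcc with h | h <;> rw [h] <;> [exact ⟨c, sq c⟩; exact ⟨-c, by ring⟩]
    have h2 : d ∣ q := by rcases hdd with h | h <;> rw [h] <;> [exact ⟨d, sq d⟩; exact ⟨-d, by ring⟩]
    exact (hgq.of_isCoprime_of_dvd_left h1).of_isCoprime_of_dvd_right h2
  have hcodd : ¬ (2:ℤ) ∣ c := by
    intro h2c
    apply hPodd
    have : (2:ℤ) ∣ P' := by rw [hc4]; exact dvd_pow h2c (by norm_num)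
    exact this.mul_left 3
  have hdodd : ¬ (2:ℤ) ∣ d := by
    intro h2d
    apply hPodd
    have hQ2 : (2:ℤ) ∣ Q := by rw [hd4]; exact dvd_pow h2d (by norm_num)
    have : 3*P' = 4*(e^2+f^2) - Q := by linarith
    rw [this]
    exact dvd_sub ⟨2*(e^2+f^2), by ring⟩ hQ2
  have hfcd : f^2 = c^2*d^2 := by
    have h0 : (f^2 - c^2*d^2) * (f^2 + c^2*d^2) = 0 := by
      have : (f^2)^2 = (c^2*d^2)^2 := by rw [← hP'Q, hc4, hd4]; ring
      linear_combination this
    rcases mul_eq_zero.mp h0 with h | h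
    · linarith
    · exfalso
      have hf0 : f^2 = 0 := by nlinarith [sq_nonneg f, sq_nonneg (c*d)]
      have : f = 0 := by nlinarith [sq_nonneg f]
      exact hf (by rw [this]; exact ⟨0, by ring⟩)
  refine ⟨c, d, hcd, hcodd, hdodd, hfcd, ?_⟩
  linear_combination hsum - 3*hc4 - hd4 + 4*hfcd

lemma aux_stepF (r e c d : ℤ) (hr : r ≠ 0) (hcd : IsCoprime c d)
    (hc : ¬ (2:ℤ) ∣ c) (hd : ¬ (2:ℤ) ∣ d)
    (hr2 : r^2 = 4*e^2*(c^2*d^2)) (heq : 3*c^4 + d^4 = 4*e^2 + 4*c^2*d^2) :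
    ∃ R S A B : ℤ, R ≠ 0 ∧ IsCoprime R S ∧ S^2 + R^2 = A^2 ∧ S^2 - 2*R^2 = B^2 ∧
      R.natAbs < r.natAbs := by
  obtain ⟨m, hm⟩ := aux_odd_sq hc
  obtain ⟨n, hn⟩ := aux_odd_sq hd
  obtain ⟨h, hhdef⟩ : ∃ h : ℤ, h = 12*m - 4*n + 1 := ⟨_, rfl⟩
  obtain ⟨k, hkdef⟩ : ∃ k : ℤ, k = m - n := ⟨_, rfl⟩
  have h2h : 3*c^2 - d^2 = 2*h := by rw [hhdef]; linear_combination 3*hm - hn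
  have h8k : c^2 - d^2 = 8*k := by rw [hkdef]; linear_combination hm - hn
  have he2 : e^2 = 4*(h*k) := by
    have h16 : 4*e^2 = 16*(h*k) := by
      linear_combination -heq + (c^2-d^2)*h2h + (2*h)*h8k
    linarith
  have hhodd : ¬ (2:ℤ) ∣ h := by rw [hhdef]; omega
  have hhne : h ≠ 0 := by rintro rfl; exact hhodd ⟨0, by ring⟩
  have hkne : k ≠ 0 := by
    rintro rfl
    have he0 : e = 0 := by
      have : e^2 = 0 := by rw [he2]; ring
      exact pow_eq_zero_iff (by norm_num) |>.mp this
    apply hr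
    have : r^2 = 0 := by rw [hr2, he0]; ring
    exact pow_eq_zero_iff (by norm_num) |>.mp this
  have h2e : (2:ℤ) ∣ e := by
    apply Int.prime_two.dvd_of_dvd_pow (n := 2)
    rw [he2]; exact ⟨2*(h*k), by ring⟩
  obtain ⟨g, heg⟩ := h2e
  have hg : g^2 = h*k := by
    have h4 : 4*(g^2) = 4*(h*k) := by linear_combination he2 - (e + 2*g)*heg
    linarith
  have hcophk : IsCoprime h k := by
    apply aux_isCoprime_of_forall_prime (Or.inl hhne)
    intro p hp hph hpk
    have hp2 : p ≠ 2 := by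
      rintro rfl
      exact hhodd (by exact_mod_cast hph)
    have hp2h : (p:ℤ) ∣ 3*c^2 - d^2 := by rw [h2h]; exact hph.mul_left 2
    have hp8k : (p:ℤ) ∣ c^2 - d^2 := by rw [h8k]; exact hpk.mul_left 8
    have hpc : (p:ℤ) ∣ c := by
      have h2c : (p:ℤ) ∣ 2*c^2 := by
        have : 2*c^2 = (3*c^2-d^2) - (c^2-d^2) := by ring
        rw [this]; exact dvd_sub hp2h hp8k
      exact (Nat.prime_iff_prime_int.mp hp).dvd_of_dvd_pow (aux_prime_dvd_two_mul hp h2c hp2)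
    have hpd : (p:ℤ) ∣ d := by
      have hd2 : (p:ℤ) ∣ d^2 := by
        have : d^2 = 3*c^2 - (3*c^2-d^2) := by ring
        rw [this]; exact dvd_sub ((dvd_pow hpc (by norm_num)).mul_left 3) hp2h
      exact (Nat.prime_iff_prime_int.mp hp).dvd_of_dvd_pow hd2
    exact aux_prime_not_coprime hcd hp hpc hpd
  obtain ⟨h₁, hh1⟩ := Int.sq_of_isCoprime hcophk hg.symm
  obtain ⟨k₁, hk1⟩ := Int.sq_of_isCoprime (c := g) hcophk.symm (by linear_combination hg.symm)
  -- rule out mixed signs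
  have hmain : h = h₁^2 ∧ k = k₁^2 ∨ h = -h₁^2 ∧ k = -k₁^2 := by
    rcases hh1 with h1 | h1 <;> rcases hk1 with k1 | k1
    · exact Or.inl ⟨h1, k1⟩
    · exfalso
      have hz : (h₁*k₁)^2 = 0 := by nlinarith [sq_nonneg g, sq_nonneg (h₁*k₁), hg, h1, k1]
      rcases mul_eq_zero.mp (pow_eq_zero_iff (two_ne_zero) |>.mp hz) with h0 | h0
      · exact hhodd (by rw [h1, h0]; exact ⟨0, by ring⟩)
      · exact hkne (by rw [k1, h0]; ring)
    · exfalso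
      have hz : (h₁*k₁)^2 = 0 := by nlinarith [sq_nonneg g, sq_nonneg (h₁*k₁), hg, h1, k1]
      rcases mul_eq_zero.mp (pow_eq_zero_iff (two_ne_zero) |>.mp hz) with h0 | h0
      · exact hhodd (by rw [h1, h0]; exact ⟨0, by ring⟩)
      · exact hkne (by rw [k1, h0]; ring)
    · exact Or.inr ⟨h1, k1⟩
  have hh1odd : ¬ (2:ℤ) ∣ h₁ := by
    intro h2
    apply hhodd
    have : (2:ℤ) ∣ h₁^2 := dvd_pow h2 (by norm_num)
    rcases hmain with ⟨hh, _⟩ | ⟨hh, _⟩ <;> rw [hh]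
    · exact this
    · exact this.neg_right
  rcases hmain with ⟨hh1', hk1'⟩ | ⟨hh1', hk1'⟩
  · -- positive case : new solution
    have hA2 : c^2 + (2*k₁)^2 = h₁^2 := by
      have hdbl : 2*(c^2 + (2*k₁)^2) = 2*(h₁^2) := by
        linear_combination h2h - h8k + 2*hh1' - 8*hk1'
      linarith
    have hB2 : c^2 - 2*(2*k₁)^2 = d^2 := by linear_combination h8k + 8*hk1'
    have hk1ne : k₁ ≠ 0 := by
      rintro rfl
      exact hkne (by rw [hk1']; ring)
    have hRne : (2*k₁ : ℤ) ≠ 0 := mul_ne_zero two_ne_zero hk1ne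
    have hcne : c ≠ 0 := by rintro rfl; exact hc ⟨0, by ring⟩
    have hcop : IsCoprime (2*k₁ : ℤ) c := by
      apply aux_isCoprime_of_forall_prime (Or.inr hcne)
      intro p hp hpk hpc
      have hp2 : p ≠ 2 := by
        rintro rfl
        exact hc (by exact_mod_cast hpc)
      have hpk1 : (p:ℤ) ∣ k₁ := aux_prime_dvd_two_mul hp hpk hp2
      have hpd : (p:ℤ) ∣ d := by
        have hd2 : (p:ℤ) ∣ d^2 := by
          have hexp : d^2 = c^2 - 8*k₁^2 := by linear_combination -hB2
          rw [hexp]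
          exact dvd_sub (dvd_pow hpc (by norm_num)) ((dvd_pow hpk1 (by norm_num)).mul_left 8)
        exact (Nat.prime_iff_prime_int.mp hp).dvd_of_dvd_pow hd2
      exact aux_prime_not_coprime hcd hp hpc hpd
    -- size decrease
    have hgg : g^2 = h₁^2*k₁^2 := by rw [hg, hh1', hk1']
    have he2' : e^2 = 4*(h₁^2*k₁^2) := by
      rw [← hgg]
      linear_combination (e + 2*g)*heg
    have hr2' : r^2 = 16*(h₁^2*k₁^2)*(c^2*d^2) := by rw [hr2, he2']; ring
    have hdne : d ≠ 0 := by rintro rfl; exact hd ⟨0, by ring⟩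
    have hh1ne : h₁ ≠ 0 := by rintro rfl; exact hh1odd ⟨0, by ring⟩
    have hb1 : 1 ≤ h₁^2 := by
      have : 0 < h₁^2 := lt_of_le_of_ne (sq_nonneg _) (Ne.symm (pow_ne_zero 2 hh1ne))
      omega
    have hb2 : 1 ≤ c^2 := by
      have : 0 < c^2 := lt_of_le_of_ne (sq_nonneg _) (Ne.symm (pow_ne_zero 2 hcne))
      omega
    have hb3 : 1 ≤ d^2 := by
      have : 0 < d^2 := lt_of_le_of_ne (sq_nonneg _) (Ne.symm (pow_ne_zero 2 hdne))
      omega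
    have hb4 : 1 ≤ k₁^2 := by
      have : 0 < k₁^2 := lt_of_le_of_ne (sq_nonneg _) (Ne.symm (pow_ne_zero 2 hk1ne))
      omega
    have hlt : (2*k₁)^2 < r^2 := by
      have key : (1:ℤ) ≤ h₁^2*(c^2*d^2) := by
        have k1 : (1:ℤ)*1 ≤ h₁^2*c^2 := mul_le_mul hb1 hb2 zero_le_one (by positivity)
        have k2 : (h₁^2*c^2)*1 ≤ (h₁^2*c^2)*d^2 := mul_le_mul_of_nonneg_left hb3 (by positivity)
        nlinarith [k1, k2]
      nlinarith [mul_le_mul_of_nonneg_left key (show (0:ℤ) ≤ 16*k₁^2 by positivity), hb4, hr2']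
    exact ⟨2*k₁, c, h₁, d, hRne, hcop, hA2, hB2, aux_natAbs_lt hlt⟩
  · -- negative case : contradiction mod 8
    have heq2 : c^2 + h₁^2 = 4*(k₁^2) := by
      have hdbl : 2*(c^2 + h₁^2) = 2*(4*(k₁^2)) := by
        linear_combination h2h - h8k + 2*hh1' - 8*hk1'
      linarith
    obtain ⟨m', hm'⟩ := aux_odd_sq hc
    obtain ⟨n', hn'⟩ := aux_odd_sq hh1odd
    rcases aux_sq_cases k₁ with ⟨t, ht⟩ | ⟨t, ht⟩
    · exfalso
      have hlin : 8*m' + 8*n' + 2 = 16*t := by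
        rw [hm', hn', ht] at heq2; linarith
      omega
    · exfalso
      have hlin : 8*m' + 8*n' + 2 = 32*t + 4 := by
        rw [hm', hn', ht] at heq2; linarith
      omega

lemma aux_descent : ∀ n : ℕ, ∀ r s a b : ℤ, r.natAbs = n → r ≠ 0 → IsCoprime r s →
    s^2 + r^2 = a^2 → s^2 - 2*r^2 = b^2 → False := by
  intro n
  induction n using Nat.strong_induction_on with
  | _ n ih =>
  intro r s a b hn hr hco h1 h2
  by_cases h2r : (2:ℤ) ∣ r
  · by_cases h2s : (2:ℤ) ∣ s
    · exact aux_prime_not_coprime hco Nat.prime_two (by exact_mod_cast h2r) (by exact_mod_cast h2s)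
    -- main case: r even, s odd
    obtain ⟨e, f, hef, hfodd, hs2, hr2⟩ := aux_param r s b hr h2s hco h2
    have hAA : |a|^2 = 4*e^4 + 8*e^2*f^2 + f^4 := by
      rw [sq_abs]
      linear_combination hs2 + hr2 - h1
    have hfne : f ≠ 0 := by rintro rfl; exact hfodd ⟨0, by ring⟩
    have hene : e ≠ 0 := by
      rintro rfl
      apply hr
      have : r^2 = 0 := by rw [hr2]; ring
      exact pow_eq_zero_iff (by norm_num) |>.mp this
    have hf2pos : (0:ℤ) < f^2 := lt_of_le_of_ne (sq_nonneg f) (Ne.symm (pow_ne_zero 2 hfne))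
    obtain ⟨A, hAdef, hApos⟩ : ∃ A : ℤ, A = |a| ∧ 0 ≤ A := ⟨|a|, rfl, abs_nonneg a⟩
    have hAA' : A^2 = 4*e^4 + 8*e^2*f^2 + f^4 := by rw [hAdef]; exact hAA
    obtain ⟨P, hPdef⟩ : ∃ P : ℤ, P = 2*e^2+2*f^2 - A := ⟨_, rfl⟩
    obtain ⟨Q, hQdef⟩ : ∃ Q : ℤ, Q = 2*e^2+2*f^2 + A := ⟨_, rfl⟩
    have hPQ : P*Q = 3*f^4 := by rw [hPdef, hQdef]; linear_combination -hAA'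
    have hsum : P + Q = 4*(e^2+f^2) := by rw [hPdef, hQdef]; ring
    have hQpos : 0 < Q := by rw [hQdef]; nlinarith [sq_nonneg e]
    have hPpos : 0 < P := by
      have hprod : 0 < P*Q := by rw [hPQ]; positivity
      rcases mul_pos_iff.mp hprod with ⟨hp, _⟩ | ⟨_, hq⟩
      · exact hp
      · linarith
    have hPodd : ¬ (2:ℤ) ∣ P := by
      intro hdvd
      obtain ⟨t, hPt⟩ := hdvd
      have hA2 : A = 2*(e^2+f^2-t) := by rw [hPdef] at hPt; linarith
      obtain ⟨u, hu2⟩ : ∃ u, A = 2*u := ⟨e^2+f^2-t, hA2⟩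
      have hf4 : f^4 = 2*(2*u^2 - 2*e^4 - 4*e^2*f^2) := by
        linear_combination (A + 2*u)*hu2 - hAA'
      exact hfodd (Int.prime_two.dvd_of_dvd_pow (n := 4) ⟨_, hf4⟩)
    have hcopPQ : IsCoprime P Q := by
      apply aux_isCoprime_of_forall_prime (Or.inl hPpos.ne')
      intro p hp hpP hpQ
      have hp2 : p ≠ 2 := by rintro rfl; exact hPodd (by exact_mod_cast hpP)
      have hpef : (p:ℤ) ∣ e^2 + f^2 := by
        have h4 : (p:ℤ) ∣ 2*(2*(e^2+f^2)) := by
          have : 2*(2*(e^2+f^2)) = P + Q := by rw [hsum]; ring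
          rw [this]; exact dvd_add hpP hpQ
        exact aux_prime_dvd_two_mul hp (aux_prime_dvd_two_mul hp h4 hp2) hp2
      have hp3f : (p:ℤ) ∣ 3*f^4 := by rw [← hPQ]; exact hpP.mul_right Q
      rcases (Nat.prime_iff_prime_int.mp hp).dvd_mul.mp hp3f with hp3 | hpf4
      · have hp3' : p = 3 := by
          have h33 : (p:ℤ) ∣ ((3:ℕ):ℤ) := by exact_mod_cast hp3
          rw [Int.natCast_dvd_natCast] at h33
          exact (Nat.prime_dvd_prime_iff_eq hp Nat.prime_three).mp h33
        subst hp3'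
        obtain ⟨he3, hf3⟩ := aux_three_dvd (by exact_mod_cast hpef)
        exact aux_prime_not_coprime hef Nat.prime_three (by exact_mod_cast he3) (by exact_mod_cast hf3)
      · have hpf : (p:ℤ) ∣ f := (Nat.prime_iff_prime_int.mp hp).dvd_of_dvd_pow hpf4
        have hpe : (p:ℤ) ∣ e := by
          have hpee : (p:ℤ) ∣ e^2 := by
            have hee : e^2 = (e^2+f^2) - f^2 := by ring
            rw [hee]; exact dvd_sub hpef (dvd_pow hpf (by norm_num))
          exact (Nat.prime_iff_prime_int.mp hp).dvd_of_dvd_pow hpee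
        exact aux_prime_not_coprime hef hp hpe hpf
    have h3PQ : (3:ℤ) ∣ P*Q := by rw [hPQ]; exact ⟨f^4, rfl⟩
    have hquart : ∃ c d, IsCoprime c d ∧ ¬(2:ℤ)∣c ∧ ¬(2:ℤ)∣d ∧ f^2 = c^2*d^2 ∧
        3*c^4+d^4 = 4*e^2+4*c^2*d^2 := by
      rcases Int.prime_three.dvd_mul.mp h3PQ with h3P | h3Q
      · exact aux_quartic e f P Q hfodd hPodd hPQ hsum h3P hPpos hQpos hcopPQ
      · have hQodd : ¬(2:ℤ) ∣ Q := by
          intro h2Q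
          apply hPodd
          have hPeq : P = 4*(e^2+f^2) - Q := by linarith
          rw [hPeq]
          exact dvd_sub ⟨2*(e^2+f^2), by ring⟩ h2Q
        exact aux_quartic e f Q P hfodd hQodd (by linear_combination hPQ) (by linarith) h3Q
          hQpos hPpos hcopPQ.symm
    obtain ⟨c, d, hcd, hcodd, hdodd, hfcd, heqcd⟩ := hquart
    have hr2' : r^2 = 4*e^2*(c^2*d^2) := by rw [hr2, hfcd]
    obtain ⟨R, S, A', B', hRne, hcopRS, hA', hB', hlt⟩ :=
      aux_stepF r e c d hr hcd hcodd hdodd hr2' heqcd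
    exact ih R.natAbs (hn ▸ hlt) R S A' B' rfl hRne hcopRS hA' hB'
  · -- r odd
    obtain ⟨m, hm⟩ := aux_odd_sq h2r
    by_cases h2s : (2:ℤ) ∣ s
    · obtain ⟨n', hn'⟩ := aux_even_sq h2s
      rcases aux_sq_cases b with ⟨t, ht⟩ | ⟨t, ht⟩
      · have hlin : 4*n' - 16*m - 2 = 4*t := by rw [hm, hn', ht] at h2; linarith
        omega
      · have hlin : 4*n' - 16*m - 2 = 8*t + 1 := by rw [hm, hn', ht] at h2; linarith
        omega
    · obtain ⟨n', hn'⟩ := aux_odd_sq h2s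
      rcases aux_sq_cases a with ⟨t, ht⟩ | ⟨t, ht⟩
      · have hlin : 8*n' + 8*m + 2 = 4*t := by rw [hm, hn', ht] at h1; linarith
        omega
      · have hlin : 8*n' + 8*m + 2 = 8*t + 1 := by rw [hm, hn', ht] at h1; linarith
        omega

theorem stmt_11 (r s y : ℤ) (hco : IsCoprime r s) (hr : r ≠ 0) (hs : s ≠ 0) :
    y^2 ≠ s^4 - r^2*s^2 - 2*r^4 := by
  intro h
  have hpos : 0 < s^2 + r^2 := by
    have h1 : 0 < r^2 := lt_of_le_of_ne (sq_nonneg r) (Ne.symm (pow_ne_zero 2 hr))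
    nlinarith [sq_nonneg s]
  have hco2 : IsCoprime (s^2 - 2*r^2) (s^2 + r^2) := by
    apply aux_isCoprime_of_forall_prime (Or.inr hpos.ne')
    intro p hp hp1 hp2
    have hp3r : (p:ℤ) ∣ 3*r^2 := by
      have hid : 3*r^2 = (s^2+r^2) - (s^2-2*r^2) := by ring
      rw [hid]; exact dvd_sub hp2 hp1
    have hp3s : (p:ℤ) ∣ 3*s^2 := by
      have hid : 3*s^2 = 2*(s^2+r^2) + (s^2-2*r^2) := by ring
      rw [hid]; exact dvd_add (hp2.mul_left 2) hp1
    by_cases hp3 : p = 3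
    · subst hp3
      obtain ⟨hs3, hr3⟩ := aux_three_dvd (x := s) (y := r) (by exact_mod_cast hp2)
      exact aux_prime_not_coprime hco Nat.prime_three (by exact_mod_cast hr3) (by exact_mod_cast hs3)
    · have hpprime := Nat.prime_iff_prime_int.mp hp
      have hnot3 : ¬ (p:ℤ) ∣ 3 := by
        intro hd
        apply hp3
        have h33 : (p:ℤ) ∣ ((3:ℕ):ℤ) := by exact_mod_cast hd
        rw [Int.natCast_dvd_natCast] at h33
        exact (Nat.prime_dvd_prime_iff_eq hp Nat.prime_three).mp h33
      have hpr : (p:ℤ) ∣ r := by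
        rcases hpprime.dvd_mul.mp hp3r with hd | hd
        · exact absurd hd hnot3
        · exact hpprime.dvd_of_dvd_pow hd
      have hps : (p:ℤ) ∣ s := by
        rcases hpprime.dvd_mul.mp hp3s with hd | hd
        · exact absurd hd hnot3
        · exact hpprime.dvd_of_dvd_pow hd
      exact aux_prime_not_coprime hco hp hpr hps
  have hprod : (s^2-2*r^2) * (s^2+r^2) = y^2 := by linear_combination -h
  obtain ⟨b, hb⟩ := Int.sq_of_isCoprime hco2 hprod
  obtain ⟨a, ha⟩ := Int.sq_of_isCoprime (c := y) hco2.symm (by linear_combination -h)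
  have ha' : s^2 + r^2 = a^2 := by
    rcases ha with ha | ha
    · exact ha
    · exfalso; nlinarith [sq_nonneg a]
  have hb' : s^2 - 2*r^2 = b^2 := by
    rcases hb with hb | hb
    · exact hb
    · exfalso
      have hsum0 : y^2 + (b*a)^2 = 0 := by
        have hy2 : y^2 = (s^2-2*r^2)*(s^2+r^2) := hprod.symm
        rw [hy2, hb, ha']
        ring
      have hba : (b*a)^2 = 0 := by nlinarith [sq_nonneg y, sq_nonneg (b*a)]
      rcases mul_eq_zero.mp (pow_eq_zero_iff (two_ne_zero) |>.mp hba) with h0 | h0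
      · -- b = 0 : s² = 2r²
        have hs2 : s^2 = 2*r^2 := by rw [h0] at hb; linear_combination hb
        have h2s : (2:ℤ) ∣ s := Int.prime_two.dvd_of_dvd_pow (n := 2) ⟨r^2, hs2⟩
        obtain ⟨s', hs'⟩ := id h2s
        have hr2 : r^2 = 2*s'^2 := by
          have hd : 2*(r^2) = 2*(2*s'^2) := by
            rw [hs'] at hs2; linear_combination -hs2
          linarith
        have h2r : (2:ℤ) ∣ r := Int.prime_two.dvd_of_dvd_pow (n := 2) ⟨s'^2, hr2⟩
        exact aux_prime_not_coprime hco Nat.prime_two (by exact_mod_cast h2r)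
          (by exact_mod_cast h2s)
      · -- a = 0 : s² + r² = 0
        rw [h0] at ha'
        nlinarith
  exact aux_descent r.natAbs r s a b rfl hr hco ha' hb'
end

section
/- Let n be a nonzero integer and suppose a, b, c are rationals with a² + b² = c², ab = 2n, and c ≠ a. Then the point (x, y) = (nb/(c − a), 2n²/(c − a)) satisfies y² = x³ − n²x with y ≠ 0. -/
theorem congruent_curve_of_pythagorean {K : Type*} [Field K] {n a b c : K}
    (h1 : a ^ 2 + b ^ 2 = c ^ 2) (h2 : a * b = 2 * n) (hca : c ≠ a) :
    (2 * n ^ 2 / (c - a)) ^ 2 = (n * b / (c - a)) ^ 3 - n ^ 2 * (n * b / (c - a)) := by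
  have hd : c - a ≠ 0 := sub_ne_zero.mpr hca
  field_simp
  -- `b² - (c - a)² = 2a(c - a)` by the Pythagorean relation, and `2ab = 4n`.
  linear_combination (-n ^ 3 * b) * h1 + (-2 * n ^ 3 * (c - a)) * h2

theorem stmt_18 (n : ℤ) (hn : n ≠ 0) (a b c : ℚ) (h1 : a^2 + b^2 = c^2)
    (h2 : a * b = 2 * (n : ℚ)) (hca : c ≠ a) :
    ((2 * (n : ℚ)^2 / (c - a))^2 =
      ((n : ℚ) * b / (c - a))^3 - (n : ℚ)^2 * ((n : ℚ) * b / (c - a))) ∧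
      2 * (n : ℚ)^2 / (c - a) ≠ 0 := by
  have hnq : (n : ℚ) ≠ 0 := Int.cast_ne_zero.mpr hn
  have hd : c - a ≠ 0 := sub_ne_zero.mpr hca
  exact ⟨congruent_curve_of_pythagorean h1 h2 hca, by positivity⟩
end
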